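/- arXiv:1409.3188 — 4 statements merged into one kernel-verified Lean document; each statement's English description precedes it below -/
import Mathlib

section
/- Let Ξ(y) = θ₃(2y)² / (θ₃(y)·θ₃(4y)) for y > 0 (this is the Belfiore–Solé secrecy function of the 4-modular lattice C⁽⁴⁾ = ℤ ⊕ √2ℤ ⊕ 2ℤ, whose theta series is θ₃(y)θ₃(2y)θ₃(4y), relative to the cubic lattice √2·ℤ³ of equal volume, whose theta series is θ₃(2y)³). Then Ξ is strictly decreasing on (0, 1/2] and strictly increasing on [1/2, ∞); in particular Ξ attains a strict global minimum on (0, ∞) at y = 1/2. Hence the generalized Belfiore–Solé secrecy function conjecture (that the secrecy function of an l-modular lattice attains its global maximum at y = 1/√l) fails for the 4-modular lattice C⁽⁴⁾. -/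
open Real Filter Set

/-- Jacobi theta function θ₂ at purely imaginary argument τ = iy. -/
noncomputable def θ₂ (y : ℝ) : ℝ := ∑' n : ℤ, Real.exp (-Real.pi * ((n : ℝ) + 1/2)^2 * y)

/-- Jacobi theta function θ₃ at purely imaginary argument τ = iy. -/
noncomputable def θ₃ (y : ℝ) : ℝ := ∑' n : ℤ, Real.exp (-Real.pi * (n : ℝ)^2 * y)

/-- Jacobi theta function θ₄ at purely imaginary argument τ = iy. -/
noncomputable def θ₄ (y : ℝ) : ℝ := ∑' n : ℤ, (-1 : ℝ)^n * Real.exp (-Real.pi * (n : ℝ)^2 * y)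

/-- The secrecy function of the 4-modular lattice C⁽⁴⁾ = ℤ ⊕ √2ℤ ⊕ 2ℤ relative to the cubic
lattice of equal volume. -/
noncomputable def Ξ (y : ℝ) : ℝ := θ₃ (2*y)^2 / (θ₃ y * θ₃ (4*y))

/-!
Splitting the theta series by parity gives θ₃(y) = θ₃(4y) + θ₂(4y) and
θ₃(2y)² = θ₃(4y)² + θ₂(4y)², so Ξ(y) = (1 + r²)/(1 + r) with r = θ₂(4y)/θ₃(4y), and
r ↦ (1 + r²)/(1 + r) is decreasing on [0, √2 - 1]. Jacobi's inversion θ₃(1/t) = √t θ₃(t) gives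
r = √2 - 1 at y = 1/2 and the symmetry Ξ(1/(4y)) = Ξ(y), so it remains to see that θ₂/θ₃ is
decreasing on [2, ∞). There e^{πt/4} θ₂(t) = ∑ e^{-π n(n+1) t} is antitone, while
e^{πt/4} θ₃(t) is strictly increasing because ∑ n² e^{-π n² t} ≤ 1/4 controls how fast θ₃ decays.
-/

lemma summable_exp_neg_pi_mul_add_sq (a : ℝ) {t : ℝ} (ht : 0 < t) :
    Summable fun n : ℤ => exp (-π * ((n : ℝ) + a) ^ 2 * t) :=
  (HurwitzKernelBounds.summable_f_int 0 a ht).congr fun n => by simp [HurwitzKernelBounds.f_int]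

lemma summable_θ₃_term {t : ℝ} (ht : 0 < t) :
    Summable fun n : ℤ => exp (-π * (n : ℝ) ^ 2 * t) := by
  simpa using summable_exp_neg_pi_mul_add_sq 0 ht

lemma summable_sq_mul_θ₃_term {t : ℝ} (ht : 0 < t) :
    Summable fun n : ℤ => (n : ℝ) ^ 2 * exp (-π * (n : ℝ) ^ 2 * t) :=
  (HurwitzKernelBounds.summable_f_int 2 0 ht).congr fun n => by simp [HurwitzKernelBounds.f_int]

lemma hasSum_θ₃ {t : ℝ} (ht : 0 < t) :
    HasSum (fun n : ℤ => exp (-π * (n : ℝ) ^ 2 * t)) (θ₃ t) :=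
  (summable_θ₃_term ht).hasSum

lemma hasSum_θ₂ {t : ℝ} (ht : 0 < t) :
    HasSum (fun n : ℤ => exp (-π * ((n : ℝ) + 1 / 2) ^ 2 * t)) (θ₂ t) :=
  (summable_exp_neg_pi_mul_add_sq _ ht).hasSum

lemma one_le_θ₃ {t : ℝ} (ht : 0 < t) : 1 ≤ θ₃ t := by
  simpa using le_hasSum (hasSum_θ₃ ht) 0 fun n _ => (exp_pos _).le

lemma θ₃_pos {t : ℝ} (ht : 0 < t) : 0 < θ₃ t := one_pos.trans_le (one_le_θ₃ ht)

lemma θ₂_pos {t : ℝ} (ht : 0 < t) : 0 < θ₂ t :=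
  (hasSum_θ₂ ht).summable.tsum_pos (fun _ => (exp_pos _).le) 0 (exp_pos _)

lemma HasSum.sq_of_nonneg {ι : Type*} {f : ι → ℝ} {a : ℝ} (hf : HasSum f a) (h0 : 0 ≤ f) :
    HasSum (fun p : ι × ι => f p.1 * f p.2) (a ^ 2) :=
  sq a ▸ hf.mul hf (hf.summable.mul_of_nonneg hf.summable h0 h0)

section Parity

variable {M : Type*} [AddCommMonoid M] [TopologicalSpace M] [ContinuousAdd M] {a b : M}

lemma HasSum.int_even_add_odd {f : ℤ → M} (he : HasSum (fun k => f (2 * k)) a)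
    (ho : HasSum (fun k => f (2 * k + 1)) b) : HasSum f (a + b) := by
  have := mul_right_injective₀ (two_ne_zero' ℤ)
  replace ho := ((add_left_injective 1).comp this).hasSum_range_iff.2 ho
  refine (this.hasSum_range_iff.2 he).add_isCompl ?_ ho
  simpa [Function.comp_def] using Int.isCompl_even_odd

lemma HasSum.int_prod_even_add_odd {f : ℤ × ℤ → M}
    (he : HasSum (fun p : ℤ × ℤ => f (p.1 + p.2, p.1 - p.2)) a)
    (ho : HasSum (fun p : ℤ × ℤ => f (p.1 + p.2 + 1, p.1 - p.2)) b) : HasSum f (a + b) := by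
  have hie : Function.Injective fun p : ℤ × ℤ => (p.1 + p.2, p.1 - p.2) := by
    intro p q h; simp only [Prod.mk.injEq] at h; ext <;> omega
  have hio : Function.Injective fun p : ℤ × ℤ => (p.1 + p.2 + 1, p.1 - p.2) := by
    intro p q h; simp only [Prod.mk.injEq] at h; ext <;> omega
  have hre : (range fun p : ℤ × ℤ => (p.1 + p.2, p.1 - p.2)) =
      (fun p : ℤ × ℤ => p.1 + p.2) ⁻¹' {n | Even n} := by
    ext ⟨m, n⟩
    simp only [mem_range, mem_preimage, mem_ofPred_eq, Prod.exists, Prod.mk.injEq]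
    exact ⟨fun ⟨u, v, hm, hn⟩ => ⟨u, by omega⟩, fun ⟨k, hk⟩ => ⟨k, m - k, by omega, by omega⟩⟩
  have hro : (range fun p : ℤ × ℤ => (p.1 + p.2 + 1, p.1 - p.2)) =
      (fun p : ℤ × ℤ => p.1 + p.2) ⁻¹' {n | Odd n} := by
    ext ⟨m, n⟩
    simp only [mem_range, mem_preimage, mem_ofPred_eq, Prod.exists, Prod.mk.injEq]
    exact ⟨fun ⟨u, v, hm, hn⟩ => ⟨u, by omega⟩, fun ⟨k, hk⟩ => ⟨k, m - 1 - k, by omega, by omega⟩⟩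
  refine (hie.hasSum_range_iff.2 he).add_isCompl ?_ (hio.hasSum_range_iff.2 ho)
  rw [hre, hro]
  exact Int.isCompl_even_odd.preimage _

end Parity

lemma θ₃_eq_θ₃_add_θ₂ {t : ℝ} (ht : 0 < t) : θ₃ t = θ₃ (4 * t) + θ₂ (4 * t) := by
  have h4t : 0 < 4 * t := by positivity
  refine (HasSum.int_even_add_odd ?_ ?_).tsum_eq
  · convert hasSum_θ₃ h4t using 3 with k
    push_cast; ring
  · convert hasSum_θ₂ h4t using 3 with k
    push_cast; ring

lemma θ₃_sq_eq_add {t : ℝ} (ht : 0 < t) : θ₃ t ^ 2 = θ₃ (2 * t) ^ 2 + θ₂ (2 * t) ^ 2 := by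
  have h2t : 0 < 2 * t := by positivity
  refine ((hasSum_θ₃ ht).sq_of_nonneg fun _ => (exp_pos _).le).unique
    (HasSum.int_prod_even_add_odd ?_ ?_)
  · convert (hasSum_θ₃ h2t).sq_of_nonneg fun _ => (exp_pos _).le using 2 with p
    simp only [← exp_add]; congr 1; push_cast; ring
  · convert (hasSum_θ₂ h2t).sq_of_nonneg fun _ => (exp_pos _).le using 2 with p
    simp only [← exp_add]; congr 1; push_cast; ring

lemma θ₃_sub_θ₃_le {t₁ t₂ : ℝ} (h₁ : 0 < t₁) (h : t₁ ≤ t₂) :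
    θ₃ t₁ - θ₃ t₂ ≤ π * (t₂ - t₁) * ∑' n : ℤ, (n : ℝ) ^ 2 * exp (-π * (n : ℝ) ^ 2 * t₁) := by
  have hterm (n : ℤ) : exp (-π * (n : ℝ) ^ 2 * t₁) - exp (-π * (n : ℝ) ^ 2 * t₂) ≤
      π * (t₂ - t₁) * ((n : ℝ) ^ 2 * exp (-π * (n : ℝ) ^ 2 * t₁)) := by
    have hsplit : exp (-π * (n : ℝ) ^ 2 * t₂) =
        exp (-π * (n : ℝ) ^ 2 * (t₂ - t₁)) * exp (-π * (n : ℝ) ^ 2 * t₁) := by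
      rw [← exp_add]; ring_nf
    nlinarith [add_one_le_exp (-π * (n : ℝ) ^ 2 * (t₂ - t₁)), exp_pos (-π * (n : ℝ) ^ 2 * t₁)]
  exact hasSum_le hterm ((hasSum_θ₃ h₁).sub (hasSum_θ₃ (h₁.trans_le h)))
    ((summable_sq_mul_θ₃_term h₁).hasSum.mul_left _)

lemma sq_mul_exp_le_exp_pow {t : ℝ} (ht : 2 ≤ t) {m : ℕ} (hm : 1 ≤ m) :
    (m : ℝ) ^ 2 * exp (-π * (m : ℝ) ^ 2 * t) ≤ exp (-5) ^ m := by
  have hπt : 6 ≤ π * t := by nlinarith [pi_gt_three]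
  have hm' : (1 : ℝ) ≤ m := by exact_mod_cast hm
  calc (m : ℝ) ^ 2 * exp (-π * m ^ 2 * t) ≤ exp (m ^ 2) * exp (-π * m ^ 2 * t) := by
        gcongr; linarith [add_one_le_exp ((m : ℝ) ^ 2)]
    _ ≤ exp (-5) ^ m := by
        rw [← exp_add, ← exp_nat_mul]; gcongr; nlinarith

lemma tsum_sq_mul_θ₃_term_le {t : ℝ} (ht : 2 ≤ t) :
    ∑' n : ℤ, (n : ℝ) ^ 2 * exp (-π * (n : ℝ) ^ 2 * t) ≤ 1 / 4 := by
  have hq : exp (-5) ≤ 1 / 9 := by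
    rw [exp_neg, inv_le_comm₀ (exp_pos _) (by norm_num)]
    linarith [quadratic_le_exp_of_nonneg (x := 5) (by norm_num)]
  have hgeom : HasSum (fun n : ℕ => exp (-5) ^ (n + 1)) (exp (-5) * (1 - exp (-5))⁻¹) := by
    simpa only [pow_succ'] using
      (hasSum_geometric_of_lt_one (exp_pos _).le (by linarith)).mul_left (exp (-5))
  have hbound (n : ℕ) : ((n + 1 : ℕ) : ℝ) ^ 2 * exp (-π * ((n + 1 : ℕ) : ℝ) ^ 2 * t) ≤
      exp (-5) ^ (n + 1) :=
    sq_mul_exp_le_exp_pow ht (by omega)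
  have hsum :
      Summable fun n : ℕ => ((n + 1 : ℕ) : ℝ) ^ 2 * exp (-π * ((n + 1 : ℕ) : ℝ) ^ 2 * t) :=
    hgeom.summable.of_nonneg_of_le (fun _ => by positivity) hbound
  rw [tsum_int_eq_zero_add_two_mul_tsum_pnat (fun n => by simp)
    (summable_sq_mul_θ₃_term (by linarith)),
    tsum_pnat_eq_tsum_succ
      (f := fun n : ℕ => ((n : ℤ) : ℝ) ^ 2 * exp (-π * ((n : ℤ) : ℝ) ^ 2 * t))]
  have hq8 : exp (-5) * (1 - exp (-5))⁻¹ ≤ 1 / 8 := by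
    rw [← div_eq_mul_inv, div_le_iff₀ (by linarith)]; linarith
  have := hgeom.tsum_eq ▸ hsum.tsum_le_tsum hbound hgeom.summable
  push_cast at this ⊢
  simp only [ne_eq, OfNat.ofNat_ne_zero, not_false_eq_true, zero_pow, mul_zero, zero_mul, zero_add,
    nsmul_eq_mul]
  linarith

lemma θ₃_inv {t : ℝ} (ht : 0 < t) : θ₃ t⁻¹ = √t * θ₃ t := by
  have h := Real.tsum_exp_neg_mul_int_sq ht
  rw [← sqrt_eq_rpow] at h
  have e1 : θ₃ t = ∑' n : ℤ, exp (-π * t * (n : ℝ) ^ 2) := tsum_congr fun n => by ring_nf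
  have e2 : θ₃ t⁻¹ = ∑' n : ℤ, exp (-π / t * (n : ℝ) ^ 2) := tsum_congr fun n => by ring_nf
  rw [e1, e2, h, ← mul_assoc, mul_one_div_cancel (sqrt_pos.2 ht).ne', one_mul]

lemma θ₂_div_θ₃_two : θ₂ 2 / θ₃ 2 = √2 - 1 := by
  have h := θ₃_eq_θ₃_add_θ₂ (t := 2⁻¹) (by norm_num)
  rw [θ₃_inv two_pos] at h
  norm_num at h
  rw [div_eq_iff (θ₃_pos two_pos).ne']
  linarith

lemma Ξ_inv_four_mul {y : ℝ} (hy : 0 < y) : Ξ (4 * y)⁻¹ = Ξ y := by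
  have e2 : 2 * (4 * y)⁻¹ = (2 * y)⁻¹ := by field_simp; ring
  have e4 : 4 * (4 * y)⁻¹ = y⁻¹ := by field_simp
  have hs : √(4 * y) * √y = √(2 * y) ^ 2 := by
    rw [← sqrt_mul (by positivity), sq_sqrt (by positivity), sqrt_eq_iff_mul_self_eq] <;> nlinarith
  rw [Ξ, Ξ, e2, e4, θ₃_inv (by positivity), θ₃_inv hy, θ₃_inv (by positivity), mul_pow,
    mul_mul_mul_comm, mul_comm (θ₃ (4 * y)), ← hs, mul_div_mul_left _ _ (by positivity)]

lemma strictMonoOn_exp_mul_θ₃ : StrictMonoOn (fun t => exp (π * t / 4) * θ₃ t) (Ici 2) := by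
  intro t₁ (h₁ : 2 ≤ t₁) t₂ (h₂ : 2 ≤ t₂) h
  set x := π * (t₂ - t₁) / 4
  have hx : 0 < x := by have := pi_pos; simp only [x]; nlinarith
  have hθ : θ₃ t₁ < exp x * θ₃ t₂ := calc
    θ₃ t₁ ≤ θ₃ t₂ + 4 * x * ∑' n : ℤ, (n : ℝ) ^ 2 * exp (-π * (n : ℝ) ^ 2 * t₁) := by
      have := θ₃_sub_θ₃_le (by linarith) h.le
      simp only [x]; linarith
    _ ≤ θ₃ t₂ + 4 * x * (1 / 4) := by gcongr; exact tsum_sq_mul_θ₃_term_le h₁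
    _ < θ₃ t₂ + (exp x - 1) := by linarith [add_one_lt_exp hx.ne']
    _ ≤ θ₃ t₂ + (exp x - 1) * θ₃ t₂ := by
      have := add_one_lt_exp hx.ne'
      have : exp x - 1 ≤ (exp x - 1) * θ₃ t₂ :=
        le_mul_of_one_le_right (by linarith) (one_le_θ₃ (by linarith))
      linarith
    _ = exp x * θ₃ t₂ := by ring
  calc exp (π * t₁ / 4) * θ₃ t₁ < exp (π * t₁ / 4) * (exp x * θ₃ t₂) := by gcongr
    _ = exp (π * t₂ / 4) * θ₃ t₂ := by rw [← mul_assoc, ← exp_add]; simp only [x]; ring_nf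

lemma hasSum_exp_mul_θ₂ {t : ℝ} (ht : 0 < t) :
    HasSum (fun n : ℤ => exp (-π * ((n : ℝ) * (n + 1)) * t)) (exp (π * t / 4) * θ₂ t) := by
  refine ((hasSum_θ₂ ht).mul_left (exp (π * t / 4))).congr_fun fun n => ?_
  rw [← exp_add]; ring_nf

lemma antitoneOn_exp_mul_θ₂ : AntitoneOn (fun t => exp (π * t / 4) * θ₂ t) (Ioi 0) := by
  intro t₁ (h₁ : 0 < t₁) t₂ (h₂ : 0 < t₂) h
  refine hasSum_le (fun n => exp_le_exp.2 ?_) (hasSum_exp_mul_θ₂ h₂) (hasSum_exp_mul_θ₂ h₁)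
  have hn : 0 ≤ n * (n + 1) := by rcases le_or_gt 0 n with hn | hn <;> nlinarith
  have hn' : (0 : ℝ) ≤ n * (n + 1) := by exact_mod_cast hn
  nlinarith [mul_nonneg (mul_nonneg pi_pos.le hn') (sub_nonneg.2 h)]

lemma strictAntiOn_θ₂_div_θ₃ : StrictAntiOn (fun t => θ₂ t / θ₃ t) (Ici 2) := by
  intro t₁ (h₁ : 2 ≤ t₁) t₂ (h₂ : 2 ≤ t₂) h
  have e (t : ℝ) : θ₂ t / θ₃ t = exp (π * t / 4) * θ₂ t / (exp (π * t / 4) * θ₃ t) :=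
    (mul_div_mul_left _ _ (exp_pos _).ne').symm
  simp only [e]
  exact div_lt_div₀'
    (antitoneOn_exp_mul_θ₂ (mem_Ioi.2 (by linarith)) (mem_Ioi.2 (by linarith)) h.le)
    (strictMonoOn_exp_mul_θ₃ h₁ h₂ h) (mul_pos (exp_pos _) (θ₂_pos (by linarith)))
    (mul_pos (exp_pos _) (θ₃_pos (by linarith)))

lemma Ξ_eq_one_add_sq_div_one_add {y : ℝ} (hy : 0 < y) :
    Ξ y = (1 + (θ₂ (4 * y) / θ₃ (4 * y)) ^ 2) / (1 + θ₂ (4 * y) / θ₃ (4 * y)) := by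
  have h := θ₃_sq_eq_add (t := 2 * y) (by positivity)
  rw [show 2 * (2 * y) = 4 * y by ring] at h
  have := θ₃_pos (by positivity : 0 < 4 * y)
  have := θ₂_pos (by positivity : 0 < 4 * y)
  rw [Ξ, h, θ₃_eq_θ₃_add_θ₂ hy]
  field_simp

lemma strictAntiOn_one_add_sq_div_one_add :
    StrictAntiOn (fun r : ℝ => (1 + r ^ 2) / (1 + r)) (Icc 0 (√2 - 1)) := by
  rintro r ⟨hr, -⟩ s ⟨-, hs⟩ hrs
  have h2 : √2 ^ 2 = 2 := sq_sqrt (by norm_num)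
  have hkey : r + s + r * s < 1 := by nlinarith [sqrt_nonneg 2]
  rw [div_lt_div_iff₀ (by linarith) (by linarith)]
  nlinarith [mul_pos (sub_pos.2 hrs) (sub_pos.2 hkey)]

lemma strictMonoOn_Ξ : StrictMonoOn Ξ (Ici (1 / 2)) := by
  intro y₁ (h₁ : 1 / 2 ≤ y₁) y₂ (h₂ : 1 / 2 ≤ y₂) h
  have hr {y : ℝ} (hy : 1 / 2 ≤ y) : θ₂ (4 * y) / θ₃ (4 * y) ∈ Icc 0 (√2 - 1) :=
    ⟨div_nonneg (θ₂_pos (by linarith)).le (θ₃_pos (by linarith)).le,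
      θ₂_div_θ₃_two ▸ strictAntiOn_θ₂_div_θ₃.antitoneOn self_mem_Ici (mem_Ici.2 (by linarith))
        (by linarith)⟩
  rw [Ξ_eq_one_add_sq_div_one_add (by linarith),
    Ξ_eq_one_add_sq_div_one_add (by linarith)]
  exact strictAntiOn_one_add_sq_div_one_add (hr h₂) (hr h₁)
    (strictAntiOn_θ₂_div_θ₃ (mem_Ici.2 (by linarith)) (mem_Ici.2 (by linarith)) (by linarith))

lemma strictAntiOn_Ξ : StrictAntiOn Ξ (Ioc 0 (1 / 2)) := by
  rintro y₁ ⟨h₁, h₁'⟩ y₂ ⟨h₂, h₂'⟩ h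
  have hmem {y : ℝ} (hy : 0 < y) (hy' : y ≤ 1 / 2) : (4 * y)⁻¹ ∈ Ici (1 / 2) := by
    rw [mem_Ici, le_inv_comm₀ (by norm_num) (by positivity)]; linarith
  rw [← Ξ_inv_four_mul h₁, ← Ξ_inv_four_mul h₂]
  exact strictMonoOn_Ξ (hmem h₂ h₂') (hmem h₁ h₁')
    ((inv_lt_inv₀ (by positivity) (by positivity)).2 (by linarith))

lemma Ξ_half_lt {y : ℝ} (hy : 0 < y) (hne : y ≠ 1 / 2) : Ξ (1 / 2) < Ξ y := by
  rcases hne.lt_or_gt with h | h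
  · exact strictAntiOn_Ξ ⟨hy, h.le⟩ ⟨by norm_num, le_rfl⟩ h
  · exact strictMonoOn_Ξ self_mem_Ici (mem_Ici.2 h.le) h

/-- The secrecy function Ξ of C⁽⁴⁾ is strictly decreasing on (0, 1/2], strictly increasing on
[1/2, ∞), attains a strict global minimum on (0,∞) at y = 1/2, and hence the generalized
Belfiore–Solé conjecture (global maximum at y = 1/√4 = 1/2) fails for C⁽⁴⁾. -/
theorem C4_counterexample :
    StrictAntiOn Ξ (Set.Ioc 0 (1/2)) ∧
    StrictMonoOn Ξ (Set.Ici (1/2)) ∧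
    (∀ y : ℝ, 0 < y → y ≠ 1/2 → Ξ (1/2) < Ξ y) ∧
    ¬ (∀ y : ℝ, 0 < y → Ξ y ≤ Ξ (1/2)) :=
  ⟨strictAntiOn_Ξ, strictMonoOn_Ξ, fun _ => Ξ_half_lt,
    fun h => (Ξ_half_lt one_pos (by norm_num)).not_ge (h 1 one_pos)⟩
end

section
/- For y > 0, one has θ₂(y) = θ₄(y) if and only if y = 1. -/
open Real Filter Set

/-!
Jacobi's imaginary transformation gives `θ₂ (1/y) = √y θ₄ y`, hence `θ₂ 1 = θ₄ 1`, and it turns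
the case `y < 1` into the case `y > 1`. For `y > 1` put `G a = exp (-π a) - exp (-π a y)`. Folding
the sums over `ℤ` onto `ℕ`,
  `θ₂ 1 - θ₂ y = 2 ∑ G ((k + 1/2)²)` and `θ₄ 1 - θ₄ y = 2 ∑ (-1)^(k+1) G ((k + 1)²)`.
As `G ≥ 0` and `G` is decreasing on `[1/π, ∞)`, the second series is termwise below the first,
strictly at `k = 0`; so `θ₄ 1 - θ₄ y < θ₂ 1 - θ₂ y`, that is `θ₂ y < θ₄ y`.
-/

section JacobiTheta₂

open Complex

lemma jacobiTheta₂_term_I_mul_div_two (y : ℝ) (n : ℤ) :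
    jacobiTheta₂_term n (I * y / 2) (I * y) =
      ((rexp (π * y / 4) * rexp (-π * ((n : ℝ) + 1/2)^2 * y) : ℝ) : ℂ) := by
  rw [jacobiTheta₂_term, ← Real.exp_add, Complex.ofReal_exp]
  congr 1
  push_cast
  linear_combination (π * n * y + π * n ^ 2 * y) * I_sq

lemma jacobiTheta₂_term_half (y : ℝ) (n : ℤ) :
    jacobiTheta₂_term n (1/2) (I * y) =
      (((-1 : ℝ)^n * rexp (-π * (n : ℝ)^2 * y) : ℝ) : ℂ) := by
  have h : 2 * π * I * n * (1/2 : ℂ) + π * I * n ^ 2 * (I * y) =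
      n * (π * I) + ((-π * (n : ℝ)^2 * y : ℝ) : ℂ) := by
    push_cast
    linear_combination π * n ^ 2 * y * I_sq
  rw [jacobiTheta₂_term, h, Complex.exp_add, Complex.exp_int_mul, Complex.exp_pi_mul_I]
  push_cast
  rfl

lemma jacobiTheta₂_I_mul_div_two (y : ℝ) :
    jacobiTheta₂ (I * y / 2) (I * y) = ((rexp (π * y / 4) * θ₂ y : ℝ) : ℂ) := by
  rw [jacobiTheta₂, θ₂, ← tsum_mul_left, Complex.ofReal_tsum]
  exact tsum_congr (jacobiTheta₂_term_I_mul_div_two y)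

lemma jacobiTheta₂_half (y : ℝ) : jacobiTheta₂ (1/2) (I * y) = θ₄ y := by
  rw [jacobiTheta₂, θ₄, Complex.ofReal_tsum]
  exact tsum_congr (jacobiTheta₂_term_half y)

lemma summable_theta₂_term {y : ℝ} (hy : 0 < y) :
    Summable fun n : ℤ => rexp (-π * ((n : ℝ) + 1/2)^2 * y) := by
  have h := (summable_jacobiTheta₂_term_iff (I * y / 2) (I * y)).mpr (by simpa using hy)
  simp_rw [jacobiTheta₂_term_I_mul_div_two, Complex.summable_ofReal] at h
  simpa [← mul_assoc, Real.exp_ne_zero] using h.mul_left (rexp (π * y / 4))⁻¹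

lemma summable_theta₄_term {y : ℝ} (hy : 0 < y) :
    Summable fun n : ℤ => (-1 : ℝ)^n * rexp (-π * (n : ℝ)^2 * y) := by
  have h := (summable_jacobiTheta₂_term_iff (1/2) (I * y)).mpr (by simpa using hy)
  simp_rw [jacobiTheta₂_term_half, Complex.summable_ofReal] at h
  exact h

lemma theta₂_inv {y : ℝ} (hy : 0 < y) : θ₂ y⁻¹ = √y * θ₄ y := by
  have hy' : (y : ℂ) ≠ 0 := ofReal_ne_zero.mpr hy.ne'
  have h := jacobiTheta₂_functional_equation (1/2) (I * y)
  have hz : (1/2 : ℂ) / (I * y) = -(I * (y⁻¹ : ℝ) / 2) := by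
    push_cast
    field_simp
    linear_combination I_sq
  have hτ : (-1 : ℂ) / (I * y) = I * (y⁻¹ : ℝ) := by
    push_cast
    field_simp
    linear_combination -I_sq
  have hsqrt : (-I * (I * y)) ^ (1/2 : ℂ) = (√y : ℝ) := by
    rw [show -I * (I * y) = ((y : ℝ) : ℂ) by linear_combination -(y : ℂ) * I_sq,
      show (1/2 : ℂ) = ((1/2 : ℝ) : ℂ) by norm_num, ← ofReal_cpow hy.le, Real.sqrt_eq_rpow]
  have hexp : -(π : ℂ) * I * (1/2)^2 / (I * y) = ((-(π * y⁻¹ / 4)) : ℝ) := by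
    push_cast
    field_simp
    norm_num
  rw [jacobiTheta₂_half, hz, hτ, hsqrt, hexp, jacobiTheta₂_neg_left,
    jacobiTheta₂_I_mul_div_two, ← ofReal_exp, ← ofReal_one, ← ofReal_div, ← ofReal_mul,
    ← ofReal_mul, ofReal_inj, mul_assoc, ← mul_assoc (rexp _), ← Real.exp_add,
    neg_add_cancel, Real.exp_zero, one_mul] at h
  rw [h, ← mul_assoc, mul_one_div_cancel (Real.sqrt_pos.mpr hy).ne', one_mul]

lemma theta₄_inv {y : ℝ} (hy : 0 < y) : θ₄ y⁻¹ = √y * θ₂ y := by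
  have h := theta₂_inv (inv_pos.mpr hy)
  rw [inv_inv, Real.sqrt_inv] at h
  rw [h, mul_inv_cancel_left₀ (Real.sqrt_pos.mpr hy).ne']

end JacobiTheta₂

lemma tsum_int_eq_two_mul_tsum_nat {f : ℤ → ℝ} (hf : Summable f)
    (hsymm : ∀ n : ℕ, f (-(n + 1)) = f n) : ∑' n, f n = 2 * ∑' n : ℕ, f n := by
  rw [← tsum_nat_add_neg_add_one hf, ← tsum_mul_left]
  exact tsum_congr fun n => by rw [hsymm, two_mul]

lemma tsum_int_eq_add_two_mul_tsum_nat_succ {f : ℤ → ℝ} (hf : Summable f) (heven : f.Even) :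
    ∑' n, f n = f 0 + 2 * ∑' n : ℕ, f (n + 1 : ℕ) := by
  rw [tsum_int_eq_zero_add_two_mul_tsum_pnat heven hf, nsmul_eq_mul, Nat.cast_ofNat,
    tsum_pnat_eq_tsum_succ (f := fun n : ℕ => f n)]

noncomputable def expGap (y a : ℝ) : ℝ := rexp (-π * a) - rexp (-π * a * y)

lemma expGap_nonneg {y a : ℝ} (hy : 1 ≤ y) (ha : 0 ≤ a) : 0 ≤ expGap y a := by
  rw [expGap, sub_nonneg, Real.exp_le_exp]
  nlinarith [mul_nonneg pi_pos.le ha]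

lemma expGap_pos {y a : ℝ} (hy : 1 < y) (ha : 0 < a) : 0 < expGap y a := by
  rw [expGap, sub_pos, Real.exp_lt_exp]
  nlinarith [mul_pos pi_pos ha]

lemma antitoneOn_expGap {y : ℝ} (hy : 1 ≤ y) : AntitoneOn (expGap y) (Ici π⁻¹) := by
  have hderiv (a : ℝ) : HasDerivAt (expGap y)
      (rexp (-π * a) * -π - rexp (-π * a * y) * (-π * y)) a := by
    have h1 := ((hasDerivAt_id a).const_mul (-π)).exp
    have h2 := (((hasDerivAt_id a).const_mul (-π)).mul_const y).exp
    simp only [id, mul_one] at h1 h2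
    exact h1.sub h2
  refine antitoneOn_of_deriv_nonpos (convex_Ici _) (by unfold expGap; fun_prop)
    (fun a _ => (hderiv a).differentiableAt.differentiableWithinAt) fun a ha => ?_
  rw [interior_Ici, mem_Ioi, inv_lt_iff_one_lt_mul₀ pi_pos] at ha
  -- `y ≤ 1 + π a (y - 1) ≤ exp (π a (y - 1))` since `π a ≥ 1`
  have hy_le : y ≤ rexp (π * a * (y - 1)) := by
    nlinarith [add_one_le_exp (π * a * (y - 1))]
  have : y * rexp (-π * a * y) ≤ rexp (-π * a) := by
    calc y * rexp (-π * a * y) ≤ rexp (π * a * (y - 1)) * rexp (-π * a * y) := by gcongr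
      _ = rexp (-π * a) := by rw [← Real.exp_add]; ring_nf
  rw [(hderiv a).deriv]
  nlinarith [pi_pos]

lemma theta₂_one_sub {y : ℝ} (hy : 0 < y) :
    θ₂ 1 - θ₂ y = 2 * ∑' k : ℕ, expGap y (((k : ℝ) + 1/2)^2) := by
  have h₁ := summable_theta₂_term one_pos
  have hs := summable_theta₂_term hy
  rw [θ₂, θ₂, ← h₁.tsum_sub hs,
    tsum_int_eq_two_mul_tsum_nat (h₁.sub hs) fun n => by push_cast; ring_nf]
  simp only [expGap, mul_one, Int.cast_natCast]

lemma theta₄_one_sub {y : ℝ} (hy : 0 < y) :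
    θ₄ 1 - θ₄ y = 2 * ∑' k : ℕ, (-1 : ℝ)^(k + 1) * expGap y (((k : ℝ) + 1)^2) := by
  have h₁ := summable_theta₄_term one_pos
  have hs := summable_theta₄_term hy
  rw [θ₄, θ₄, ← h₁.tsum_sub hs, tsum_int_eq_add_two_mul_tsum_nat_succ (h₁.sub hs) fun n => by
    simp only [Int.cast_neg, neg_sq, zpow_neg, ← inv_zpow, inv_neg, inv_one]]
  simp only [zpow_natCast, Int.cast_natCast]
  norm_num [expGap, mul_sub]

lemma neg_one_pow_mul_expGap_le {y : ℝ} (hy : 1 ≤ y) (k : ℕ) :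
    (-1 : ℝ)^(k + 1) * expGap y (((k : ℝ) + 1)^2) ≤ expGap y (((k : ℝ) + 1/2)^2) := by
  rcases Nat.even_or_odd k with hk | hk
  · rw [hk.add_one.neg_one_pow, neg_one_mul, neg_le]
    exact (neg_nonpos.mpr (expGap_nonneg hy (by positivity))).trans
      (expGap_nonneg hy (by positivity))
  · have hk₁ : (1 : ℝ) ≤ k := by exact_mod_cast hk.pos
    have hπ : π⁻¹ ≤ ((k : ℝ) + 1/2)^2 := by
      nlinarith [inv_le_one_of_one_le₀ (by linarith [pi_gt_three] : (1 : ℝ) ≤ π)]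
    rw [hk.add_one.neg_one_pow, one_mul]
    exact antitoneOn_expGap hy hπ (hπ.trans (by gcongr; norm_num)) (by gcongr; norm_num)

lemma theta₄_one_sub_lt_theta₂_one_sub {y : ℝ} (hy : 1 < y) : θ₄ 1 - θ₄ y < θ₂ 1 - θ₂ y := by
  have hy₀ : 0 < y := one_pos.trans hy
  have h₂ := (summable_theta₂_term one_pos).sub (summable_theta₂_term hy₀)
  have h₄ := (summable_theta₄_term one_pos).sub (summable_theta₄_term hy₀)
  rw [theta₄_one_sub hy₀, theta₂_one_sub hy₀]
  gcongr
  refine Summable.tsum_lt_tsum (i := 0) (neg_one_pow_mul_expGap_le hy.le) ?_ ?_ ?_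
  · have h₁ := expGap_pos hy one_pos
    have h₀ := expGap_nonneg hy.le (sq_nonneg (1/2 : ℝ))
    norm_num at h₀ ⊢
    linarith
  · refine ((summable_nat_add_iff 1).mpr (h₄.comp_injective Nat.cast_injective)).congr fun k => ?_
    simp only [Function.comp_apply, zpow_natCast, expGap, mul_sub, mul_one]
    push_cast
    ring_nf
  · refine (h₂.comp_injective Nat.cast_injective).congr fun k => ?_
    simp [expGap]

lemma theta₂_one_eq_theta₄_one : θ₂ 1 = θ₄ 1 := by
  simpa using theta₂_inv one_pos

lemma theta₂_lt_theta₄ {y : ℝ} (hy : 1 < y) : θ₂ y < θ₄ y := by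
  linarith [theta₄_one_sub_lt_theta₂_one_sub hy, theta₂_one_eq_theta₄_one]

lemma theta₄_lt_theta₂ {y : ℝ} (hy₀ : 0 < y) (hy : y < 1) : θ₄ y < θ₂ y := by
  have h := theta₂_lt_theta₄ ((one_lt_inv₀ hy₀).mpr hy)
  rw [theta₂_inv hy₀, theta₄_inv hy₀] at h
  exact lt_of_mul_lt_mul_left h (Real.sqrt_nonneg y)

/-- For y > 0, θ₂(y) = θ₄(y) if and only if y = 1. -/
theorem theta2_eq_theta4_iff (y : ℝ) (hy : 0 < y) : θ₂ y = θ₄ y ↔ y = 1 := by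
  refine ⟨fun h => ?_, fun h => h ▸ theta₂_one_eq_theta₄_one⟩
  rcases lt_trichotomy y 1 with hlt | heq | hgt
  · exact absurd h (theta₄_lt_theta₂ hy hlt).ne'
  · exact heq
  · exact absurd h (theta₂_lt_theta₄ hgt).ne
end

section
/- Let Θ_{D₄}(y) = (θ₃(y)⁴ + θ₄(y)⁴)/2 denote the theta series of the 2-modular lattice D₄. Then the 2-modular secrecy function Ξ₂(y) = (θ₃(y)·θ₃(2y))² / Θ_{D₄}(y) attains a strict global maximum on (0, ∞) at y = 1/√2: for every y > 0 with y ≠ 1/√2, Ξ₂(y) < Ξ₂(1/√2). -/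
/-!
By Jacobi's identity `θ₃(y)² + θ₄(y)² = 2 θ₃(2y)²`, obtained by reindexing the theta series of
`ℤ²` along `(u, v) ↦ (u + v, u - v)`, the secrecy function depends only on `a = θ₃(y)²` and
`c = θ₃(2y)²`, and `Ξ₂(y)⁻¹ = (√2 c - a)² / (a c) + 2 (√2 - 1)`. So it suffices that the gap
`G(y) = √2 c - a` vanishes only at `y₀ = 1/√2`. The modular relation `θ₃(1/y) = √y θ₃(y)` gives
`G(1/(2y)) = -√2 y G(y)`, so `G(y₀) = 0` and the sign of `G` flips across `y₀`. Finally `G` is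
strictly increasing on `[y₀, ∞)`: writing `θ₃(y)² = ∑_{p ∈ ℤ²} x_p` with `x_p = exp(-π |p|² y)`,
each term `√2 x_p² - x_p` of `G` decreases in `x_p` as long as `2 √2 x_p < 1`, which holds for all
`p ≠ 0` once `y ≥ y₀`.
-/

open Real Filter Set

/-- The 2-modular secrecy function of the lattice D₄. -/
noncomputable def Ξ₂D₄ (y : ℝ) : ℝ := (θ₃ y * θ₃ (2*y))^2 / ((θ₃ y ^ 4 + θ₄ y ^ 4) / 2)

noncomputable def θ₃SqTerm (y : ℝ) (p : ℤ × ℤ) : ℝ :=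
  rexp (-π * ((p.1 : ℝ) ^ 2 + (p.2 : ℝ) ^ 2) * y)

lemma summable_norm_exp_neg_pi_mul_int_sq {y : ℝ} (hy : 0 < y) :
    Summable fun n : ℤ => ‖rexp (-π * (n : ℝ) ^ 2 * y)‖ :=
  (summable_pow_mul_jacobiTheta₂_term_bound 0 hy 0).congr fun n => by
    rw [norm_of_nonneg (exp_pos _).le]; ring_nf

lemma summable_norm_neg_one_zpow_mul_exp {y : ℝ} (hy : 0 < y) :
    Summable fun n : ℤ => ‖(-1 : ℝ) ^ n * rexp (-π * (n : ℝ) ^ 2 * y)‖ := by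
  simpa only [norm_mul, norm_zpow, norm_neg, norm_one, one_zpow, one_mul]
    using summable_norm_exp_neg_pi_mul_int_sq hy

lemma θ₃_pos_s14 {y : ℝ} (hy : 0 < y) : 0 < θ₃ y :=
  (summable_norm_exp_neg_pi_mul_int_sq hy).of_norm.tsum_pos (fun _ => (exp_pos _).le) 0
    (exp_pos _)

lemma θ₃SqTerm_eq_mul (y : ℝ) (p : ℤ × ℤ) :
    θ₃SqTerm y p = rexp (-π * (p.1 : ℝ) ^ 2 * y) * rexp (-π * (p.2 : ℝ) ^ 2 * y) := by
  rw [θ₃SqTerm, ← exp_add]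
  ring_nf

lemma neg_one_zpow_mul_θ₃SqTerm_eq_mul (y : ℝ) (p : ℤ × ℤ) :
    (-1 : ℝ) ^ (p.1 + p.2) * θ₃SqTerm y p =
      (-1 : ℝ) ^ p.1 * rexp (-π * (p.1 : ℝ) ^ 2 * y) *
        ((-1 : ℝ) ^ p.2 * rexp (-π * (p.2 : ℝ) ^ 2 * y)) := by
  rw [θ₃SqTerm_eq_mul, zpow_add₀ (by norm_num), mul_mul_mul_comm]

lemma θ₃SqTerm_add_sub (y : ℝ) (u v : ℤ) :
    θ₃SqTerm y (u + v, u - v) = θ₃SqTerm (2 * y) (u, v) := by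
  simp only [θ₃SqTerm]
  push_cast
  ring_nf

lemma θ₃SqTerm_two_mul (y : ℝ) (p : ℤ × ℤ) :
    θ₃SqTerm (2 * y) p = θ₃SqTerm y p ^ 2 := by
  rw [θ₃SqTerm, θ₃SqTerm, ← exp_nat_mul]
  ring_nf

lemma summable_θ₃SqTerm {y : ℝ} (hy : 0 < y) : Summable (θ₃SqTerm y) :=
  (summable_mul_of_summable_norm (summable_norm_exp_neg_pi_mul_int_sq hy)
    (summable_norm_exp_neg_pi_mul_int_sq hy)).congr fun p => (θ₃SqTerm_eq_mul y p).symm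

lemma summable_neg_one_zpow_mul_θ₃SqTerm {y : ℝ} (hy : 0 < y) :
    Summable fun p : ℤ × ℤ => (-1 : ℝ) ^ (p.1 + p.2) * θ₃SqTerm y p :=
  (summable_mul_of_summable_norm (summable_norm_neg_one_zpow_mul_exp hy)
    (summable_norm_neg_one_zpow_mul_exp hy)).congr fun p =>
      (neg_one_zpow_mul_θ₃SqTerm_eq_mul y p).symm

lemma θ₃_sq_eq_tsum {y : ℝ} (hy : 0 < y) : θ₃ y ^ 2 = ∑' p, θ₃SqTerm y p := by
  rw [sq, θ₃, tsum_mul_tsum_of_summable_norm (summable_norm_exp_neg_pi_mul_int_sq hy)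
    (summable_norm_exp_neg_pi_mul_int_sq hy)]
  simp only [θ₃SqTerm_eq_mul]

lemma θ₄_sq_eq_tsum {y : ℝ} (hy : 0 < y) :
    θ₄ y ^ 2 = ∑' p : ℤ × ℤ, (-1 : ℝ) ^ (p.1 + p.2) * θ₃SqTerm y p := by
  rw [sq, θ₄, tsum_mul_tsum_of_summable_norm (summable_norm_neg_one_zpow_mul_exp hy)
    (summable_norm_neg_one_zpow_mul_exp hy)]
  simp only [neg_one_zpow_mul_θ₃SqTerm_eq_mul]

lemma θ₃_sq_add_θ₄_sq {y : ℝ} (hy : 0 < y) : θ₃ y ^ 2 + θ₄ y ^ 2 = 2 * θ₃ (2 * y) ^ 2 := by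
  set f : ℤ × ℤ → ℝ := fun p => (1 + (-1 : ℝ) ^ (p.1 + p.2)) * θ₃SqTerm y p
  set φ : ℤ × ℤ → ℤ × ℤ := fun q => (q.1 + q.2, q.1 - q.2)
  have hφ : Function.Injective φ := fun q q' h => by
    simp only [φ, Prod.mk.injEq] at h
    exact Prod.ext (by omega) (by omega)
  have hsupp : Function.support f ⊆ range φ := by
    intro p hp
    obtain ⟨u, hu⟩ : Even (p.1 + p.2) := by
      by_contra hodd
      exact hp (by simp [f, (Int.not_even_iff_odd.1 hodd).neg_one_zpow])
    exact ⟨(u, p.1 - u), Prod.ext (by simp [φ]) (by simp [φ]; omega)⟩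
  calc θ₃ y ^ 2 + θ₄ y ^ 2 = ∑' p, f p := by
        rw [θ₃_sq_eq_tsum hy, θ₄_sq_eq_tsum hy,
          ← (summable_θ₃SqTerm hy).tsum_add (summable_neg_one_zpow_mul_θ₃SqTerm hy)]
        exact tsum_congr fun p => by ring
    _ = ∑' q, f (φ q) := (hφ.tsum_eq hsupp).symm
    _ = ∑' q, 2 * θ₃SqTerm (2 * y) q := tsum_congr fun q => by
        have heven : Even (q.1 + q.2 + (q.1 - q.2)) := ⟨q.1, by ring⟩
        simp only [f, φ, heven.neg_one_zpow, θ₃SqTerm_add_sub]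
        norm_num
    _ = 2 * θ₃ (2 * y) ^ 2 := by rw [tsum_mul_left, θ₃_sq_eq_tsum (by positivity)]

lemma θ₃_one_div {y : ℝ} (hy : 0 < y) : θ₃ (1 / y) = √y * θ₃ y := by
  have h := tsum_exp_neg_mul_int_sq (one_div_pos.2 hy)
  rw [div_rpow zero_le_one hy.le, one_rpow, one_div_one_div, ← sqrt_eq_rpow] at h
  simp only [div_div_eq_mul_div, div_one, mul_right_comm (-π) _ ((_ : ℝ) ^ 2)] at h
  exact h

lemma one_le_normSq_of_ne_zero {p : ℤ × ℤ} (hp : p ≠ 0) :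
    1 ≤ (p.1 : ℝ) ^ 2 + (p.2 : ℝ) ^ 2 := by
  obtain ⟨m, n⟩ := p
  have key : (1 : ℤ) ≤ m ^ 2 + n ^ 2 := by
    rcases eq_or_ne m 0 with rfl | hm
    · have hn : n ≠ 0 := by rintro rfl; exact hp rfl
      nlinarith [Int.one_le_abs hn, sq_abs n]
    · nlinarith [Int.one_le_abs hm, sq_abs m, sq_nonneg n]
  exact_mod_cast key

lemma θ₃SqTerm_lt_of_lt {p : ℤ × ℤ} (hp : p ≠ 0) {y y' : ℝ} (h : y < y') :
    θ₃SqTerm y' p < θ₃SqTerm y p := by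
  have := mul_pos pi_pos (zero_lt_one.trans_le (one_le_normSq_of_ne_zero hp))
  exact exp_lt_exp.2 (by nlinarith)

lemma θ₃SqTerm_le_exp {p : ℤ × ℤ} (hp : p ≠ 0) {y : ℝ} (hy : 0 ≤ y) :
    θ₃SqTerm y p ≤ rexp (-π * y) := by
  have := one_le_normSq_of_ne_zero hp
  exact exp_le_exp.2 (by nlinarith [mul_nonneg pi_pos.le hy])

lemma strictMonoOn_mul_θ₃_two_mul_sq_sub_θ₃_sq {s y₀ : ℝ} (hs : 0 ≤ s) (hy₀ : 0 < y₀)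
    (hsmall : 2 * s * rexp (-π * y₀) < 1) :
    StrictMonoOn (fun y => s * θ₃ (2 * y) ^ 2 - θ₃ y ^ 2) (Ici y₀) := by
  intro y hy y' hy' hyy'
  have hpos : ∀ {t}, t ∈ Ici y₀ → 0 < t := fun ht => hy₀.trans_le ht
  have hsummable : ∀ {t}, t ∈ Ici y₀ →
      Summable fun p => s * θ₃SqTerm (2 * t) p - θ₃SqTerm t p := fun ht =>
    ((summable_θ₃SqTerm (by linarith [hpos ht])).mul_left s).sub
      (summable_θ₃SqTerm (hpos ht))
  have hsum : ∀ {t}, t ∈ Ici y₀ →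
      s * θ₃ (2 * t) ^ 2 - θ₃ t ^ 2 = ∑' p, (s * θ₃SqTerm (2 * t) p - θ₃SqTerm t p) := by
    intro t ht
    rw [θ₃_sq_eq_tsum (hpos ht), θ₃_sq_eq_tsum (by linarith [hpos ht]), ← tsum_mul_left,
      ((summable_θ₃SqTerm (by linarith [hpos ht])).mul_left s).tsum_sub
        (summable_θ₃SqTerm (hpos ht))]
  have hterm : ∀ {p : ℤ × ℤ}, p ≠ 0 → s * θ₃SqTerm (2 * y) p - θ₃SqTerm y p <
      s * θ₃SqTerm (2 * y') p - θ₃SqTerm y' p := by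
    intro p hp
    have hlt := θ₃SqTerm_lt_of_lt hp hyy'
    have hle : θ₃SqTerm y p ≤ rexp (-π * y₀) :=
      (θ₃SqTerm_le_exp hp (hpos hy).le).trans
        (exp_le_exp.2 (by nlinarith [pi_pos, show y₀ ≤ y from hy]))
    have hsmall' : s * (θ₃SqTerm y p + θ₃SqTerm y' p) < 1 := by
      nlinarith [mul_le_mul_of_nonneg_left hle hs, mul_le_mul_of_nonneg_left hlt.le hs]
    rw [θ₃SqTerm_two_mul, θ₃SqTerm_two_mul]
    nlinarith [mul_pos (sub_pos.2 hlt) (sub_pos.2 hsmall')]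
  beta_reduce
  rw [hsum hy, hsum hy']
  refine Summable.tsum_lt_tsum (i := (1, 0)) (fun p => ?_) (hterm (by simp))
    (hsummable hy) (hsummable hy')
  rcases eq_or_ne p 0 with rfl | hp
  · simp [θ₃SqTerm]
  · exact (hterm hp).le

noncomputable def θ₃Gap (y : ℝ) : ℝ := √2 * θ₃ (2 * y) ^ 2 - θ₃ y ^ 2

lemma θ₃Gap_one_div_two_mul {y : ℝ} (hy : 0 < y) :
    θ₃Gap (1 / (2 * y)) = -(√2 * y) * θ₃Gap y := by
  have htwo : 2 * (1 / (2 * y)) = 1 / y := by field_simp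
  rw [θ₃Gap, θ₃Gap, htwo, θ₃_one_div hy, θ₃_one_div (by positivity), mul_pow, mul_pow,
    sq_sqrt hy.le, sq_sqrt (by positivity)]
  linear_combination (y * θ₃ (2 * y) ^ 2) * sq_sqrt (zero_le_two : (0 : ℝ) ≤ 2)

lemma θ₃Gap_one_div_sqrt_two : θ₃Gap (1 / √2) = 0 := by
  have hfix : 1 / (2 * (1 / √2)) = 1 / √2 := by
    field_simp
    rw [sq_sqrt zero_le_two]
  have h := θ₃Gap_one_div_two_mul (y := 1 / √2) (by positivity)
  rw [hfix, mul_one_div_cancel (sqrt_ne_zero'.2 two_pos)] at h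
  linarith

lemma strictMonoOn_θ₃Gap : StrictMonoOn θ₃Gap (Ici (1 / √2)) := by
  refine strictMonoOn_mul_θ₃_two_mul_sq_sub_θ₃_sq (sqrt_nonneg 2) (by positivity) ?_
  have hsqrt : √2 < 3 / 2 := by nlinarith [sq_sqrt (zero_le_two : (0 : ℝ) ≤ 2), sqrt_nonneg 2]
  have hx : 2 < π * (1 / √2) := by
    rw [mul_one_div, lt_div_iff₀ (by positivity)]
    nlinarith [pi_gt_three]
  rw [neg_mul, exp_neg, ← div_eq_mul_inv, div_lt_one (exp_pos _)]
  linarith [add_one_le_exp (π * (1 / √2))]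

lemma θ₃Gap_pos {y : ℝ} (hy : 1 / √2 < y) : 0 < θ₃Gap y :=
  θ₃Gap_one_div_sqrt_two ▸ strictMonoOn_θ₃Gap self_mem_Ici hy.le hy

lemma θ₃Gap_neg {y : ℝ} (hy : 0 < y) (hy' : y < 1 / √2) : θ₃Gap y < 0 := by
  have hinv : 1 / √2 < 1 / (2 * y) := by
    rw [one_div_lt_one_div (by positivity) (by positivity)]
    rw [lt_div_iff₀ (by positivity)] at hy'
    nlinarith [sq_sqrt (zero_le_two : (0 : ℝ) ≤ 2),
      mul_lt_mul_of_pos_right hy' (sqrt_pos.2 two_pos)]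
  have h := θ₃Gap_pos hinv
  rw [θ₃Gap_one_div_two_mul hy] at h
  nlinarith [mul_pos (sqrt_pos.2 two_pos) hy]

lemma θ₃Gap_ne_zero {y : ℝ} (hy : 0 < y) (hne : y ≠ 1 / √2) : θ₃Gap y ≠ 0 := by
  rcases hne.lt_or_gt with hlt | hgt
  · exact (θ₃Gap_neg hy hlt).ne
  · exact (θ₃Gap_pos hgt).ne'

lemma Ξ₂D₄_eq {y : ℝ} (hy : 0 < y) :
    Ξ₂D₄ y = (θ₃Gap y ^ 2 / (θ₃ y ^ 2 * θ₃ (2 * y) ^ 2) + 2 * (√2 - 1))⁻¹ := by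
  have hθ₄ : θ₄ y ^ 2 = 2 * θ₃ (2 * y) ^ 2 - θ₃ y ^ 2 := by linarith [θ₃_sq_add_θ₄_sq hy]
  have ha := (θ₃_pos_s14 hy).ne'
  have hc := (θ₃_pos_s14 (by positivity : 0 < 2 * y)).ne'
  rw [Ξ₂D₄, θ₃Gap, show θ₄ y ^ 4 = (θ₄ y ^ 2) ^ 2 by ring, hθ₄, mul_pow, ← inv_div]
  congr 1
  field_simp
  linear_combination (-2 * θ₃ (2 * y) ^ 4) * sq_sqrt (zero_le_two : (0 : ℝ) ≤ 2)

/-- The 2-modular secrecy function of D₄ attains a strict global maximum on (0,∞)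
at y = 1/√2. -/
theorem D4_secrecy_max (y : ℝ) (hy : 0 < y) (hne : y ≠ 1 / Real.sqrt 2) :
    Ξ₂D₄ y < Ξ₂D₄ (1 / Real.sqrt 2) := by
  rw [Ξ₂D₄_eq hy, Ξ₂D₄_eq (by positivity), θ₃Gap_one_div_sqrt_two, zero_pow two_ne_zero,
    zero_div, zero_add]
  have hgap : 0 < θ₃Gap y ^ 2 / (θ₃ y ^ 2 * θ₃ (2 * y) ^ 2) := by
    have := θ₃Gap_ne_zero hy hne
    have := θ₃_pos_s14 hy
    have := θ₃_pos_s14 (by positivity : 0 < 2 * y)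
    positivity
  exact inv_strictAnti₀ (by linarith [one_lt_sqrt_two]) (lt_add_of_pos_left _ hgap)
end

section
/- Let p be an odd prime and let A ∈ Mₙ(ℚ) be a symmetric matrix all of whose entries have p-adic valuation ≥ 0 (i.e., entries lie in the localization ℤ₍ₚ₎ of ℤ at p), and suppose the p-adic valuation of det A is 0 (p divides neither the numerator nor denominator of det A). Then there exists a matrix S ∈ Mₙ(ℚ) all of whose entries have p-adic valuation ≥ 0, with det S = 1 or det S = −1, such that Sᵀ·A·S is a diagonal matrix diag(a₁, …, aₙ) in which every diagonal entry aᵢ has p-adic valuation exactly 0 (i.e., each aᵢ is a unit of ℤ₍ₚ₎). -/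
/-!
Over a local ring in which `2` is a unit, a symmetric matrix `A` with unit determinant has a unit
entry, since modulo the maximal ideal it does not vanish. If no diagonal entry is a unit but
`A i j` is, the transvection adding `e_j` to `e_i` produces the diagonal entry
`A i i + A j j + 2 A i j`, which is a unit. Moving a unit diagonal entry to the corner and clearing
its row and column (Schur complement) splits off a `1 × 1` block, and the complement is again
symmetric with unit determinant, so induction on the size finishes. `ℤ₍ₚ₎` is the valuation ring
of the `p`-adic valuation on `ℚ`, a local ring in which `2` is a unit when `p` is odd.
-/

open Matrix

namespace Matrix

variable {R : Type*} [CommRing R] {m n : Type*} [Fintype m] [Fintype n]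

theorem IsSymm.transpose_mul_mul {A : Matrix n n R} (hA : A.IsSymm) (T : Matrix n n R) :
    (Tᵀ * A * T).IsSymm := by
  simp [IsSymm, transpose_mul, hA.eq, Matrix.mul_assoc]

variable [DecidableEq m] [DecidableEq n]

def IsCongrUnitDiagonal (A : Matrix n n R) : Prop :=
  ∃ S : Matrix n n R, (S.det = 1 ∨ S.det = -1) ∧
    ∃ d : n → R, Sᵀ * A * S = diagonal d ∧ ∀ i, IsUnit (d i)

namespace IsCongrUnitDiagonal

theorem of_conj {A T : Matrix n n R} (hT : T.det = 1 ∨ T.det = -1)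
    (h : (Tᵀ * A * T).IsCongrUnitDiagonal) : A.IsCongrUnitDiagonal := by
  obtain ⟨S, hS, d, hdiag, hd⟩ := h
  refine ⟨T * S, ?_, d, ?_, hd⟩
  · rw [det_mul]
    rcases hT with hT | hT <;> rcases hS with hS | hS <;> simp [hT, hS]
  · rw [← hdiag, transpose_mul]
    simp only [Matrix.mul_assoc]

theorem of_submatrix (e : m ≃ n) {A : Matrix n n R}
    (h : (A.submatrix e e).IsCongrUnitDiagonal) : A.IsCongrUnitDiagonal := by
  obtain ⟨S, hS, d, hdiag, hd⟩ := h
  refine ⟨S.submatrix e.symm e.symm, by rwa [det_submatrix_equiv_self], d ∘ e.symm, ?_,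
    fun i => hd _⟩
  rw [show A = (A.submatrix e e).submatrix e.symm e.symm by simp, transpose_submatrix,
    submatrix_mul_equiv, submatrix_mul_equiv, hdiag, submatrix_diagonal_equiv]

theorem of_unique [Unique n] {A : Matrix n n R} (h : IsUnit A.det) :
    A.IsCongrUnitDiagonal := by
  refine ⟨1, Or.inl det_one, fun i => A i i, ?_, fun i => ?_⟩
  · ext i j
    rw [Subsingleton.elim j i]
    simp
  · rwa [det_unique, ← Subsingleton.elim i default] at h

theorem fromBlocks_zero {A : Matrix m m R} {D : Matrix n n R} (hA : A.IsCongrUnitDiagonal)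
    (hD : D.IsCongrUnitDiagonal) : (fromBlocks A 0 0 D).IsCongrUnitDiagonal := by
  obtain ⟨S, hS, d, hdiag, hd⟩ := hA
  obtain ⟨S', hS', d', hdiag', hd'⟩ := hD
  refine ⟨fromBlocks S 0 0 S', ?_, Sum.elim d d', ?_, ?_⟩
  · rw [det_fromBlocks_zero₂₁]
    rcases hS with hS | hS <;> rcases hS' with hS' | hS' <;> simp [hS, hS']
  · simp [fromBlocks_transpose, fromBlocks_multiply, hdiag, hdiag', ← fromBlocks_diagonal]
  · rintro (i | i)
    exacts [hd i, hd' i]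

theorem of_fromBlocks_schur {A : Matrix m m R} {B : Matrix m n R} {D : Matrix n n R}
    (hA : A.IsSymm) (hdet : IsUnit A.det)
    (h : (fromBlocks A 0 0 (D - Bᵀ * A⁻¹ * B)).IsCongrUnitDiagonal) :
    (fromBlocks A B Bᵀ D).IsCongrUnitDiagonal := by
  refine of_conj (T := fromBlocks 1 (-(A⁻¹ * B)) 0 1) (Or.inl (by simp)) ?_
  convert h using 1
  simp [fromBlocks_transpose, fromBlocks_multiply, Matrix.mul_assoc, transpose_nonsing_inv, hA.eq,
    nonsing_inv_mul _ hdet, mul_nonsing_inv_cancel_left _ _ hdet, sub_eq_add_neg, add_comm]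

theorem of_isEmpty [IsEmpty n] (A : Matrix n n R) : A.IsCongrUnitDiagonal :=
  ⟨1, Or.inl det_one, isEmptyElim, Subsingleton.elim _ _, isEmptyElim⟩

end IsCongrUnitDiagonal

theorem transpose_transvection_mul_mul_transvection_apply_self (A : Matrix n n R) (i j : n)
    (c : R) : ((transvection j i c)ᵀ * A * transvection j i c) i i =
      A i i + c * (A i j + A j i) + c ^ 2 * A j j := by
  have htr : (transvection j i c)ᵀ = transvection i j c := by
    ext a b
    simp [transvection, single, one_apply, and_comm, eq_comm]
  rw [htr, Matrix.mul_assoc, transvection_mul_apply_same, mul_transvection_apply_same,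
    mul_transvection_apply_same]
  ring

theorem isCongrUnitDiagonal_sum_of_isUnit_apply_inl {o : Type*} [Unique o] [Fintype o]
    [DecidableEq o]
    (ih : ∀ A : Matrix n n R, A.IsSymm → IsUnit A.det → A.IsCongrUnitDiagonal)
    {M : Matrix (o ⊕ n) (o ⊕ n) R} (hM : M.IsSymm) (hdet : IsUnit M.det)
    (hunit : IsUnit (M (.inl default) (.inl default))) : M.IsCongrUnitDiagonal := by
  obtain ⟨A, B, C, D, rfl⟩ : ∃ A B C D, M = fromBlocks A B C D :=
    ⟨_, _, _, _, (fromBlocks_toBlocks M).symm⟩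
  obtain ⟨hA, rfl, -, hD⟩ := isSymm_fromBlocks_iff.1 hM
  have hAdet : IsUnit A.det := by rwa [det_unique]
  refine IsCongrUnitDiagonal.of_fromBlocks_schur hA hAdet
    (IsCongrUnitDiagonal.fromBlocks_zero (.of_unique hAdet) (ih _ ?_ ?_))
  · simp [IsSymm, transpose_sub, transpose_mul, hD.eq, Matrix.mul_assoc]
  · let := A.invertibleOfIsUnitDet hAdet
    rw [det_fromBlocks₁₁, invOf_eq_nonsing_inv] at hdet
    exact isUnit_of_mul_isUnit_right hdet

section LocalRing

open IsLocalRing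

variable [IsLocalRing R]

theorem exists_isUnit_apply_of_isUnit_det [Nonempty n] {A : Matrix n n R} (h : IsUnit A.det) :
    ∃ i j, IsUnit (A i j) := by
  by_contra! hA
  have hres : (residue R).mapMatrix A = 0 := by
    ext i j
    exact (residue_eq_zero_iff _).2 (hA i j)
  apply (h.map (residue R)).ne_zero
  rw [RingHom.map_det, hres, det_zero]

theorem exists_isUnit_transvection_conj_apply_self (h2 : IsUnit (2 : R)) [Nonempty n]
    {A : Matrix n n R} (hA : A.IsSymm) (hdet : IsUnit A.det) :
    ∃ T : Matrix n n R, T.det = 1 ∧ ∃ k, IsUnit ((Tᵀ * A * T) k k) := by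
  by_cases hdiag : ∃ k, IsUnit (A k k)
  · obtain ⟨k, hk⟩ := hdiag
    exact ⟨1, det_one, k, by simpa using hk⟩
  push Not at hdiag
  obtain ⟨i, j, hij⟩ := exists_isUnit_apply_of_isUnit_det hdet
  have hne : j ≠ i := by rintro rfl; exact hdiag j hij
  refine ⟨transvection j i 1, det_transvection_of_ne _ _ hne 1, i, ?_⟩
  have hmem : A i i + A j j ∈ maximalIdeal R := add_mem (hdiag i) (hdiag j)
  rw [transpose_transvection_mul_mul_transvection_apply_self, hA.apply i j,
    show A i i + 1 * (A i j + A i j) + 1 ^ 2 * A j j = 2 * A i j + (A i i + A j j) by ring,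
    ← notMem_maximalIdeal, Ideal.add_mem_iff_left _ hmem, notMem_maximalIdeal]
  exact h2.mul hij

theorem isCongrUnitDiagonal_sum_of_isSymm (h2 : IsUnit (2 : R)) {o : Type*} [Unique o]
    [Fintype o] [DecidableEq o]
    (ih : ∀ A : Matrix n n R, A.IsSymm → IsUnit A.det → A.IsCongrUnitDiagonal)
    {M : Matrix (o ⊕ n) (o ⊕ n) R} (hM : M.IsSymm) (hdet : IsUnit M.det) :
    M.IsCongrUnitDiagonal := by
  obtain ⟨T, hT, k, hk⟩ := exists_isUnit_transvection_conj_apply_self h2 hM hdet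
  have hdet' : IsUnit (Tᵀ * M * T).det := by simpa [hT] using hdet
  let e := Equiv.swap (Sum.inl default) k
  refine .of_conj (Or.inl hT) (.of_submatrix e (isCongrUnitDiagonal_sum_of_isUnit_apply_inl ih
    ((hM.transpose_mul_mul T).submatrix e) (by rwa [det_submatrix_equiv_self]) ?_))
  simpa [e] using hk

theorem isCongrUnitDiagonal_of_isSymm (h2 : IsUnit (2 : R)) {A : Matrix n n R} (hA : A.IsSymm)
    (hdet : IsUnit A.det) : A.IsCongrUnitDiagonal := by
  revert A
  refine Fintype.induction_empty_option (P := fun n _ => ∀ [DecidableEq n] {A : Matrix n n R},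
    A.IsSymm → IsUnit A.det → A.IsCongrUnitDiagonal) ?_ ?_ ?_ n
  · intro α β _ e ih _ A hA hdet
    let := Fintype.ofEquiv β e.symm
    classical
    exact .of_submatrix e (ih (hA.submatrix e) (by rwa [det_submatrix_equiv_self]))
  · intro _ A _ _
    exact .of_isEmpty A
  · intro α _ ih _ A hA hdet
    classical
    let e := ((Equiv.optionEquivSumPUnit.{0} α).trans (Equiv.sumComm _ _)).symm
    exact .of_submatrix e (isCongrUnitDiagonal_sum_of_isSymm h2 (fun _ => ih)
      (hA.submatrix e) (by rwa [det_submatrix_equiv_self]))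

end LocalRing

end Matrix

namespace Rat

variable {p : ℕ} [Fact p.Prime]

theorem padicValuation_eq_one_iff {x : ℚ} :
    padicValuation p x = 1 ↔ ¬ p ∣ x.den ∧ ¬ (p : ℤ) ∣ x.num := by
  by_cases hden : p ∣ x.den
  · simp only [hden, not_true, false_and, iff_false]
    exact fun h => padicValuation_le_one_iff.1 h.le hden
  · have hv : padicValuation p x.den = 1 := by
      rw [← Int.cast_natCast, padicValuation_cast, Int.padicValuation_eq_one_iff]
      exact_mod_cast hden
    conv_lhs => rw [← x.num_div_den, map_div₀, hv, div_one, padicValuation_cast]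
    simp [hden, Int.padicValuation_eq_one_iff]

theorem mem_padicValuation_valuationSubring_iff {x : ℚ} :
    x ∈ (padicValuation p).valuationSubring ↔ ¬ p ∣ x.den := by
  rw [Valuation.mem_valuationSubring_iff, padicValuation_le_one_iff]

theorem isUnit_padicValuation_valuationSubring_iff {x : (padicValuation p).valuationSubring} :
    IsUnit x ↔ ¬ p ∣ (x : ℚ).den ∧ ¬ (p : ℤ) ∣ (x : ℚ).num := by
  rw [(Valuation.valuationSubring.integers _).isUnit_iff_valuation_eq_one]
  exact padicValuation_eq_one_iff

theorem isUnit_two_padicValuation_valuationSubring (hp : p ≠ 2) :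
    IsUnit (2 : (padicValuation p).valuationSubring) := by
  rw [isUnit_padicValuation_valuationSubring_iff]
  have hp2 : ¬ p ∣ 2 := fun h => hp ((Nat.prime_dvd_prime_iff_eq Fact.out Nat.prime_two).1 h)
  change ¬ p ∣ (2 : ℚ).den ∧ ¬ (p : ℤ) ∣ (2 : ℚ).num
  refine ⟨by simpa using (Fact.out : p.Prime).one_lt.ne', ?_⟩
  rw [show (2 : ℚ).num = ((2 : ℕ) : ℤ) from rfl, Int.natCast_dvd_natCast]
  exact hp2

end Rat

/-- Let p be an odd prime and A a symmetric rational matrix whose entries lie in the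
localization ℤ₍ₚ₎ (denominators prime to p) and whose determinant is a unit of ℤ₍ₚ₎ (p divides
neither numerator nor denominator of det A).  Then A can be diagonalized by a matrix S with
entries in ℤ₍ₚ₎ of determinant ±1, with all diagonal entries units of ℤ₍ₚ₎. -/
theorem diagonalize_over_Zp (p : ℕ) (hp : p.Prime) (hodd : p ≠ 2) (n : ℕ)
    (A : Matrix (Fin n) (Fin n) ℚ) (hsymm : A.IsSymm)
    (hent : ∀ i j, ¬ (p ∣ (A i j).den))
    (hdet_den : ¬ (p ∣ A.det.den)) (hdet_num : ¬ ((p : ℤ) ∣ A.det.num)) :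
    ∃ S : Matrix (Fin n) (Fin n) ℚ,
      (∀ i j, ¬ (p ∣ (S i j).den)) ∧
      (S.det = 1 ∨ S.det = -1) ∧
      ∃ d : Fin n → ℚ,
        Sᵀ * A * S = Matrix.diagonal d ∧
        ∀ i, ¬ (p ∣ (d i).den) ∧ ¬ ((p : ℤ) ∣ (d i).num) := by
  have := Fact.mk hp
  let O := (Rat.padicValuation p).valuationSubring
  let A' : Matrix (Fin n) (Fin n) O :=
    of fun i j => ⟨A i j, Rat.mem_padicValuation_valuationSubring_iff.2 (hent i j)⟩
  have hA' : A'.map O.subtype = A := rfl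
  have hsymm' : A'.IsSymm := IsSymm.ext fun i j => Subtype.ext (hsymm.apply i j)
  have hdet' : IsUnit A'.det := by
    rw [Rat.isUnit_padicValuation_valuationSubring_iff, ← ValuationSubring.coe_subtype,
      RingHom.map_det]
    exact ⟨hdet_den, hdet_num⟩
  obtain ⟨S, hS, d, hdiag, hd⟩ :=
    isCongrUnitDiagonal_of_isSymm (Rat.isUnit_two_padicValuation_valuationSubring hodd) hsymm' hdet'
  refine ⟨S.map O.subtype, fun i j => Rat.mem_padicValuation_valuationSubring_iff.1 (S i j).2, ?_,
    fun i => d i, ?_, fun i => Rat.isUnit_padicValuation_valuationSubring_iff.1 (hd i)⟩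
  · rw [← RingHom.mapMatrix_apply, ← RingHom.map_det]
    rcases hS with h | h <;> simp [h]
  · rw [← hA', ← transpose_map, ← Matrix.map_mul, ← Matrix.map_mul, hdiag,
      diagonal_map (map_zero _)]
    rfl
end
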